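/- For every p ∈ [0,1), the depolarized GHZ state G(p) = (1−p)|GHZ⟩⟨GHZ| + p·I₈/8 is not a virtual quantum Markov chain: its blocks satisfy Q_B^{(01)} = Q_B^{(10)} = 0 while Q_BC^{(01)} = (1−p)|00⟩⟨11|/2 ≠ 0, so ker[Q_B] is not contained in ker[Q_BC]. For p = 1 the state is the maximally mixed state, which is a virtual quantum Markov chain. -/
import Mathlib


open Matrix BigOperators
open scoped ComplexOrder

/-- The block `Q_BC^(ij) = ⟨i|_A ρ_ABC |j⟩_A` of a tripartite operator. -/
noncomputable def QBC {dA dB dC : ℕ}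
    (ρ : Matrix (Fin dA × Fin dB × Fin dC) (Fin dA × Fin dB × Fin dC) ℂ)
    (i j : Fin dA) : Matrix (Fin dB × Fin dC) (Fin dB × Fin dC) ℂ :=
  Matrix.of fun bc bc' => ρ (i, bc.1, bc.2) (j, bc'.1, bc'.2)

/-- The block `Q_B^(ij) = ⟨i|_A (tr_C ρ_ABC) |j⟩_A`. -/
noncomputable def QB {dA dB dC : ℕ}
    (ρ : Matrix (Fin dA × Fin dB × Fin dC) (Fin dA × Fin dB × Fin dC) ℂ)
    (i j : Fin dA) : Matrix (Fin dB) (Fin dB) ℂ :=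
  Matrix.of fun b b' => ∑ c : Fin dC, ρ (i, b, c) (j, b', c)

/-- A linear, Hermitian-preserving and trace-preserving map from system `B` to `B ⊗ C`. -/
def IsHPTP {dB dC : ℕ}
    (R : Matrix (Fin dB) (Fin dB) ℂ → Matrix (Fin dB × Fin dC) (Fin dB × Fin dC) ℂ) : Prop :=
  IsLinearMap ℂ R ∧ (∀ M, R Mᴴ = (R M)ᴴ) ∧ (∀ M, (R M).trace = M.trace)

/-- The virtual quantum Markov chain criterion `ker [Q_B] ⊆ ker [Q_BC]`. -/
def IsVQMC {dA dB dC : ℕ}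
    (ρ : Matrix (Fin dA × Fin dB × Fin dC) (Fin dA × Fin dB × Fin dC) ℂ) : Prop :=
  ∀ c : Fin dA → Fin dA → ℂ,
    (∑ i, ∑ j, c i j • QB ρ i j) = 0 → (∑ i, ∑ j, c i j • QBC ρ i j) = 0

/-- Outer product `|v⟩⟨v|` of a three-qubit vector. -/
noncomputable def outer (v : Fin 2 × Fin 2 × Fin 2 → ℂ) :
    Matrix (Fin 2 × Fin 2 × Fin 2) (Fin 2 × Fin 2 × Fin 2) ℂ :=
  Matrix.of fun x y => v x * star (v y)

/-- The three-qubit GHZ state `(|000⟩ + |111⟩)/√2`. -/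
noncomputable def ghz : Fin 2 × Fin 2 × Fin 2 → ℂ :=
  fun x => if x = (0,0,0) ∨ x = (1,1,1) then (1 / Real.sqrt 2 : ℝ) else 0

/-- The depolarized GHZ state `G(p) = (1-p)|GHZ⟩⟨GHZ| + p I₈/8`. -/
noncomputable def depGHZ (p : ℝ) : Matrix (Fin 2 × Fin 2 × Fin 2) (Fin 2 × Fin 2 × Fin 2) ℂ :=
  ((1 - p : ℝ) : ℂ) • outer ghz + ((p / 8 : ℝ) : ℂ) • (1 : Matrix _ _ ℂ)

/-- for every `p ∈ [0,1)` the depolarized GHZ state `G(p)` is not a virtual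
quantum Markov chain, while `G(1)` (the maximally mixed state) is. -/
theorem depolarized_GHZ_not_vqmc :
    (∀ p : ℝ, 0 ≤ p → p < 1 → ¬ IsVQMC (depGHZ p)) ∧ IsVQMC (depGHZ 1) := by
  constructor
  · intro p _ hp hv
    have hQB : (∑ i, ∑ j, (fun i j => if i = 0 ∧ j = 1 then (1:ℂ) else 0) i j • QB (depGHZ p) i j) = 0 := by
      ext b b'
      simp only [Fin.sum_univ_two, QB, depGHZ, outer, ghz, Matrix.one_apply, Prod.ext_iff,
        Matrix.of_apply, Matrix.add_apply, Matrix.smul_apply, Matrix.zero_apply]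
      fin_cases b <;> fin_cases b' <;> simp
    have := hv _ hQB
    have h2 := Matrix.ext_iff.2 this ((0,0) : Fin 2 × Fin 2) ((1,1) : Fin 2 × Fin 2)
    simp [Fin.sum_univ_two, QBC, depGHZ, outer, ghz, Matrix.one_apply, Prod.ext_iff] at h2
    exact absurd (by exact_mod_cast h2 : (1:ℝ) - p = 0) (by linarith)
  · intro c hc
    have h00 := Matrix.ext_iff.2 hc 0 0
    simp [Fin.sum_univ_two, QB, depGHZ, outer, ghz, Matrix.one_apply, Prod.ext_iff] at h00
    ext bc bc'
    obtain ⟨b, cc⟩ := bc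
    obtain ⟨b', cc'⟩ := bc'
    simp [Fin.sum_univ_two, QBC, depGHZ, outer, ghz, Matrix.one_apply, Prod.ext_iff]
    fin_cases b <;> fin_cases cc <;> fin_cases b' <;> fin_cases cc' <;>
      simp <;> linear_combination (1/2 : ℂ) * h00
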